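/- arXiv:math/0207193 — 3 statements merged into one kernel-verified Lean document; each statement's English description precedes it below -/
import Mathlib

section
/- Let f, h : ℝ → ℝ be continuous nonnegative functions and λ > 0 a constant. If f(t)² ≤ e^{-λt} ∫₀ᵗ e^{λτ} h(τ) f(τ) dτ for all t ≥ 0, then ∫₀ᵀ f(t) dt ≤ (2/λ) ∫₀ᵀ h(t) dt for every T ≥ 0. -/
open Real MeasureTheory Set

/-!
With `c = λ/2`, `g(t) = e^{ct} f(t)` and `k(t) = e^{ct} h(t)` the hypothesis reads
`g(t)² ≤ ∫₀ᵗ k g`. Since `√(∫₀ᵗ k g + ε²)` dominates `g` and so has derivative at most `k/2`,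
this gives `g(t) ≤ ½ ∫₀ᵗ k`, i.e. `f ≤ ½ A` for the damped primitive
`A(t) = e^{-ct} ∫₀ᵗ e^{cτ} h(τ) dτ`. Finally `A' = h - cA`, `A(0) = 0` and `A ≥ 0` give
`c ∫₀ᵀ A ≤ ∫₀ᵀ h`, so `∫₀ᵀ f ≤ (1/λ) ∫₀ᵀ h`.
-/

section SqrtGronwall

variable {k g : ℝ → ℝ} {a : ℝ}

theorem sqrt_integral_mul_add_sq_le (hk : Continuous k) (hg : Continuous g)
    (hk0 : ∀ t ≥ a, 0 ≤ k t) (hyp : ∀ t ≥ a, g t ^ 2 ≤ ∫ τ in a..t, k τ * g τ)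
    {ε : ℝ} (hε : 0 < ε) {t : ℝ} (ht : a ≤ t) :
    √((∫ τ in a..t, k τ * g τ) + ε ^ 2) ≤ ε + (1 / 2) * ∫ τ in a..t, k τ := by
  set G : ℝ → ℝ := fun t => ∫ τ in a..t, k τ * g τ
  set W : ℝ → ℝ := fun t => ∫ τ in a..t, k τ
  have hGd : ∀ t, HasDerivAt G (k t * g t) t := fun t =>
    ((hk.mul hg).integral_hasStrictDerivAt a t).hasDerivAt
  have hWd : ∀ t, HasDerivAt W (k t) t := fun t => (hk.integral_hasStrictDerivAt a t).hasDerivAt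
  have hpos : ∀ t ≥ a, 0 < G t + ε ^ 2 := fun t ht => by nlinarith [hyp t ht, sq_nonneg (g t)]
  have hanti : AntitoneOn (fun t => √(G t + ε ^ 2) - (1 / 2) * W t) (Ici a) := by
    refine antitoneOn_of_hasDerivWithinAt_nonpos (convex_Ici a)
      (f' := fun t => k t * g t / (2 * √(G t + ε ^ 2)) - (1 / 2) * k t) ?_
      (fun t ht => ?_) (fun t ht => ?_)
    · have hGc : Continuous G := continuous_iff_continuousAt.2 fun t => (hGd t).continuousAt
      have hWc : Continuous W := continuous_iff_continuousAt.2 fun t => (hWd t).continuousAt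
      exact Continuous.continuousOn (by fun_prop)
    · rw [interior_Ici] at ht
      exact (((hGd t).add_const _).sqrt (hpos t ht.le).ne' |>.sub
        ((hWd t).const_mul (1 / 2))).hasDerivWithinAt
    · rw [interior_Ici] at ht
      have hgV : g t ≤ √(G t + ε ^ 2) :=
        le_sqrt_of_sq_le (by linarith [hyp t ht.le, sq_nonneg ε])
      have hV := sqrt_pos.mpr (hpos t ht.le)
      rw [sub_nonpos, div_le_iff₀ (by positivity)]
      nlinarith [mul_le_mul_of_nonneg_left hgV (hk0 t ht.le)]
  have := hanti self_mem_Ici ht ht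
  simp only [G, W, intervalIntegral.integral_same, zero_add, sqrt_sq hε.le, mul_zero,
    sub_zero] at this
  linarith

theorem le_half_integral_of_sq_le_integral_mul (hk : Continuous k) (hg : Continuous g)
    (hk0 : ∀ t ≥ a, 0 ≤ k t) (hyp : ∀ t ≥ a, g t ^ 2 ≤ ∫ τ in a..t, k τ * g τ)
    {t : ℝ} (ht : a ≤ t) :
    g t ≤ (1 / 2) * ∫ τ in a..t, k τ :=
  le_of_forall_pos_le_add fun ε hε =>
    calc g t ≤ √((∫ τ in a..t, k τ * g τ) + ε ^ 2) :=
          le_sqrt_of_sq_le (by linarith [hyp t ht, sq_nonneg ε])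
      _ ≤ ε + (1 / 2) * ∫ τ in a..t, k τ := sqrt_integral_mul_add_sq_le hk hg hk0 hyp hε ht
      _ = _ := add_comm _ _

end SqrtGronwall

section DampedPrimitive

variable {h : ℝ → ℝ} {c a b : ℝ}

theorem hasDerivAt_exp_neg_mul_integral_exp_mul (hh : Continuous h) (c a t : ℝ) :
    HasDerivAt (fun t => exp (-c * t) * ∫ τ in a..t, exp (c * τ) * h τ)
      (h t - c * (exp (-c * t) * ∫ τ in a..t, exp (c * τ) * h τ)) t := by
  have hk : Continuous fun τ => exp (c * τ) * h τ := by fun_prop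
  have he : HasDerivAt (fun t => exp (-c * t)) (exp (-c * t) * -c) t := by
    simpa using ((hasDerivAt_id t).const_mul (-c)).exp
  refine (he.mul (hk.integral_hasStrictDerivAt a t).hasDerivAt).congr_deriv ?_
  have : exp (-c * t) * exp (c * t) = 1 := by rw [← exp_add]; simp
  linear_combination h t * this

theorem continuous_exp_neg_mul_integral_exp_mul (hh : Continuous h) (c a : ℝ) :
    Continuous fun t => exp (-c * t) * ∫ τ in a..t, exp (c * τ) * h τ :=
  continuous_iff_continuousAt.2 fun t =>
    (hasDerivAt_exp_neg_mul_integral_exp_mul hh c a t).continuousAt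

theorem mul_integral_exp_neg_mul_integral_exp_mul_le (hh : Continuous h)
    (hh0 : ∀ t ∈ Icc a b, 0 ≤ h t) (hab : a ≤ b) :
    c * ∫ t in a..b, exp (-c * t) * ∫ τ in a..t, exp (c * τ) * h τ ≤ ∫ t in a..b, h t := by
  set A : ℝ → ℝ := fun t => exp (-c * t) * ∫ τ in a..t, exp (c * τ) * h τ
  have hA : Continuous A := continuous_exp_neg_mul_integral_exp_mul hh c a
  have hftc : ∫ t in a..b, (h t - c * A t) = A b - A a :=
    intervalIntegral.integral_eq_sub_of_hasDerivAt
      (fun t _ => hasDerivAt_exp_neg_mul_integral_exp_mul hh c a t)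
      ((hh.sub (continuous_const.mul hA)).intervalIntegrable a b)
  have hAb : 0 ≤ A b := mul_nonneg (exp_nonneg _) <|
    intervalIntegral.integral_nonneg hab fun τ hτ => mul_nonneg (exp_nonneg _) (hh0 τ hτ)
  rw [intervalIntegral.integral_sub (g := fun t => c * A t) (hh.intervalIntegrable a b)
    ((continuous_const.mul hA).intervalIntegrable a b), intervalIntegral.integral_const_mul] at hftc
  simp only [A, intervalIntegral.integral_same, mul_zero, sub_zero] at hftc
  linarith

end DampedPrimitive

theorem le_half_exp_neg_mul_integral_of_sq_le_exp_neg_mul_integral {f h : ℝ → ℝ} {lam a : ℝ}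
    (hf : Continuous f) (hh : Continuous h) (hh0 : ∀ t ≥ a, 0 ≤ h t)
    (hyp : ∀ t ≥ a, f t ^ 2 ≤ exp (-lam * t) * ∫ τ in a..t, exp (lam * τ) * h τ * f τ)
    {t : ℝ} (ht : a ≤ t) :
    f t ≤ (1 / 2) * (exp (-(lam / 2) * t) * ∫ τ in a..t, exp (lam / 2 * τ) * h τ) := by
  have hsq : ∀ τ, exp (lam / 2 * τ) ^ 2 = exp (lam * τ) := fun τ => by
    rw [← exp_nat_mul]; ring_nf
  have hweighted : ∀ t ≥ a, (exp (lam / 2 * t) * f t) ^ 2 ≤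
      ∫ τ in a..t, exp (lam / 2 * τ) * h τ * (exp (lam / 2 * τ) * f τ) := fun t ht =>
    calc (exp (lam / 2 * t) * f t) ^ 2 = exp (lam * t) * f t ^ 2 := by rw [mul_pow, hsq]
      _ ≤ exp (lam * t) * (exp (-lam * t) * ∫ τ in a..t, exp (lam * τ) * h τ * f τ) :=
        mul_le_mul_of_nonneg_left (hyp t ht) (exp_nonneg _)
      _ = ∫ τ in a..t, exp (lam / 2 * τ) * h τ * (exp (lam / 2 * τ) * f τ) := by
        rw [← mul_assoc, ← exp_add]
        simp only [add_neg_cancel, neg_mul, exp_zero, one_mul]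
        congr 1 with τ
        rw [← hsq]; ring
  have hg := le_half_integral_of_sq_le_integral_mul (k := fun t => exp (lam / 2 * t) * h t)
    (g := fun t => exp (lam / 2 * t) * f t) (by fun_prop) (by fun_prop)
    (fun t ht => mul_nonneg (exp_nonneg _) (hh0 t ht)) hweighted ht
  have he : exp (-(lam / 2) * t) * exp (lam / 2 * t) = 1 := by rw [← exp_add]; simp
  calc f t = exp (-(lam / 2) * t) * (exp (lam / 2 * t) * f t) := by rw [← mul_assoc, he, one_mul]
    _ ≤ exp (-(lam / 2) * t) * ((1 / 2) * ∫ τ in a..t, exp (lam / 2 * τ) * h τ) :=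
      mul_le_mul_of_nonneg_left hg (exp_nonneg _)
    _ = _ := by ring

theorem stmt_0_general (f h : ℝ → ℝ) (lam : ℝ)
    (hf : Continuous f) (hh : Continuous h)
    (hh0 : ∀ t, 0 ≤ h t) (hlam : 0 < lam)
    (hyp : ∀ t ≥ (0:ℝ),
      (f t) ^ 2 ≤ Real.exp (-lam * t) * ∫ τ in (0:ℝ)..t, Real.exp (lam * τ) * h τ * f τ) :
    ∀ T ≥ (0:ℝ), (∫ t in (0:ℝ)..T, f t) ≤ (2 / lam) * ∫ t in (0:ℝ)..T, h t := by
  intro T hT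
  set A : ℝ → ℝ := fun t => exp (-(lam / 2) * t) * ∫ τ in 0..t, exp (lam / 2 * τ) * h τ
  have hA : Continuous A := continuous_exp_neg_mul_integral_exp_mul hh _ 0
  have hdamped : lam / 2 * ∫ t in 0..T, A t ≤ ∫ t in 0..T, h t :=
    mul_integral_exp_neg_mul_integral_exp_mul_le hh (fun t _ => hh0 t) hT
  have hh_nonneg : 0 ≤ ∫ t in (0:ℝ)..T, h t :=
    intervalIntegral.integral_nonneg hT fun t _ => hh0 t
  calc (∫ t in (0:ℝ)..T, f t) ≤ ∫ t in (0:ℝ)..T, (1 / 2) * A t :=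
        intervalIntegral.integral_mono_on hT (hf.intervalIntegrable 0 T)
          ((continuous_const.mul hA).intervalIntegrable 0 T) fun t ht =>
            le_half_exp_neg_mul_integral_of_sq_le_exp_neg_mul_integral hf hh
              (fun t _ => hh0 t) hyp ht.1
    _ = (1 / lam) * (lam / 2 * ∫ t in 0..T, A t) := by
        rw [intervalIntegral.integral_const_mul]; field_simp
    _ ≤ (1 / lam) * ∫ t in (0:ℝ)..T, h t := by gcongr
    _ ≤ (2 / lam) * ∫ t in (0:ℝ)..T, h t := by gcongr; norm_num

theorem stmt_0 (f h : ℝ → ℝ) (lam : ℝ)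
    (hf : Continuous f) (hh : Continuous h)
    (hf0 : ∀ t, 0 ≤ f t) (hh0 : ∀ t, 0 ≤ h t) (hlam : 0 < lam)
    (hyp : ∀ t ≥ (0:ℝ),
      (f t) ^ 2 ≤ Real.exp (-lam * t) * ∫ τ in (0:ℝ)..t, Real.exp (lam * τ) * h τ * f τ) :
    ∀ T ≥ (0:ℝ), (∫ t in (0:ℝ)..T, f t) ≤ (2 / lam) * ∫ t in (0:ℝ)..T, h t :=
  stmt_0_general f h lam hf hh hh0 hlam hyp
end

section
/- For any twice continuously differentiable function f : ℝ → ℝ and any real numbers a < b, one has ∫ₐᵇ f'(x)² dx ≤ 2 (b-a)² ∫ₐᵇ f''(x)² dx + 2 (f(b) - f(a))² / (b-a). -/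
open Real MeasureTheory Set

/-!
Take a mean-value point `c ∈ (a, b)`, so that `f' c = (f b - f a) / (b - a)`. Writing
`f' x = f' c + ∫_c^x f''`, the bound `(p + q)² ≤ 2p² + 2q²` and Cauchy–Schwarz give
`f' x ² ≤ 2 f' c ² + 2 (b - a) ∫_a^b f''²` for every `x ∈ [a, b]`; integrate over `[a, b]`.
-/

theorem sq_intervalIntegral_le_mul_integral_sq {g : ℝ → ℝ} {u v : ℝ} (huv : u ≤ v)
    (hg : IntervalIntegrable g volume u v)
    (hg2 : IntervalIntegrable (fun t => g t ^ 2) volume u v) :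
    (∫ t in u..v, g t) ^ 2 ≤ (v - u) * ∫ t in u..v, g t ^ 2 := by
  set I := ∫ t in u..v, g t
  set J := ∫ t in u..v, g t ^ 2
  -- expanding `0 ≤ ∫ ((v - u) g - I)²` gives `0 ≤ (v - u) ((v - u) J - I²)`
  have hexpand : ∫ t in u..v, ((v - u) * g t - I) ^ 2 = (v - u) * ((v - u) * J - I ^ 2) := by
    have h1 : IntervalIntegrable (fun t => (v - u) ^ 2 * g t ^ 2 - 2 * (v - u) * I * g t)
        volume u v := (hg2.const_mul _).sub (hg.const_mul _)
    have hpt : ∀ t, ((v - u) * g t - I) ^ 2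
        = (v - u) ^ 2 * g t ^ 2 - 2 * (v - u) * I * g t + I ^ 2 := fun t => by ring
    simp_rw [hpt]
    rw [intervalIntegral.integral_add h1 intervalIntegrable_const,
      intervalIntegral.integral_sub (hg2.const_mul _) (hg.const_mul _)]
    simp only [intervalIntegral.integral_const_mul, intervalIntegral.integral_const,
      smul_eq_mul, I, J]
    ring
  have hnonneg : 0 ≤ (v - u) * ((v - u) * J - I ^ 2) :=
    hexpand ▸ intervalIntegral.integral_nonneg huv fun t _ => sq_nonneg _
  rcases huv.eq_or_lt with rfl | hlt
  · simp [I]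
  · nlinarith [sub_pos.2 hlt]

theorem sq_intervalIntegral_le_of_mem_Icc {g : ℝ → ℝ} {a b c x : ℝ}
    (hc : c ∈ Icc a b) (hx : x ∈ Icc a b) (hg : IntervalIntegrable g volume a b)
    (hg2 : IntervalIntegrable (fun t => g t ^ 2) volume a b) :
    (∫ t in c..x, g t) ^ 2 ≤ (b - a) * ∫ t in a..b, g t ^ 2 := by
  wlog hcx : c ≤ x generalizing c x
  · rw [intervalIntegral.integral_symm, neg_sq]
    exact this hx hc (le_of_not_ge hcx)
  have hsub : uIcc c x ⊆ uIcc a b := uIcc_subset_uIcc (Icc_subset_uIcc hc) (Icc_subset_uIcc hx)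
  have hmono : ∫ t in c..x, g t ^ 2 ≤ ∫ t in a..b, g t ^ 2 :=
    intervalIntegral.integral_mono_interval hc.1 hcx hx.2
      (Filter.Eventually.of_forall fun t => sq_nonneg _) hg2
  have hnonneg : 0 ≤ ∫ t in c..x, g t ^ 2 :=
    intervalIntegral.integral_nonneg hcx fun t _ => sq_nonneg _
  calc (∫ t in c..x, g t) ^ 2 ≤ (x - c) * ∫ t in c..x, g t ^ 2 :=
        sq_intervalIntegral_le_mul_integral_sq hcx (hg.mono_set hsub) (hg2.mono_set hsub)
    _ ≤ (b - a) * ∫ t in a..b, g t ^ 2 :=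
        mul_le_mul (by linarith [hc.1, hx.2]) hmono hnonneg (by linarith [hc.1, hx.2])

theorem sq_le_two_mul_sq_add_integral_deriv_sq {g : ℝ → ℝ} (hg : ContDiff ℝ 1 g)
    {a b c x : ℝ}
    (hc : c ∈ Icc a b) (hx : x ∈ Icc a b) :
    g x ^ 2 ≤ 2 * g c ^ 2 + 2 * (b - a) * ∫ t in a..b, deriv g t ^ 2 := by
  have hg' : Continuous (deriv g) := hg.continuous_deriv le_rfl
  have hftc : g x = g c + ∫ t in c..x, deriv g t := by
    rw [intervalIntegral.integral_deriv_eq_sub (fun y _ => hg.differentiable one_ne_zero y)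
      (hg'.intervalIntegrable c x)]
    ring
  have hbound := sq_intervalIntegral_le_of_mem_Icc hc hx (hg'.intervalIntegrable a b)
    ((hg'.pow 2).intervalIntegrable a b)
  calc g x ^ 2 ≤ 2 * (g c ^ 2 + (∫ t in c..x, deriv g t) ^ 2) := hftc ▸ add_sq_le
    _ ≤ 2 * g c ^ 2 + 2 * (b - a) * ∫ t in a..b, deriv g t ^ 2 := by linarith

theorem integral_sq_le_of_contDiff_one {g : ℝ → ℝ} (hg : ContDiff ℝ 1 g) {a b c : ℝ}
    (hc : c ∈ Icc a b) :
    ∫ x in a..b, g x ^ 2 ≤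
      2 * (b - a) * g c ^ 2 + 2 * (b - a) ^ 2 * ∫ t in a..b, deriv g t ^ 2 := by
  have hab : a ≤ b := hc.1.trans hc.2
  calc ∫ x in a..b, g x ^ 2
      ≤ ∫ _ in a..b, (2 * g c ^ 2 + 2 * (b - a) * ∫ t in a..b, deriv g t ^ 2) :=
        intervalIntegral.integral_mono_on hab ((hg.continuous.pow 2).intervalIntegrable a b)
          intervalIntegrable_const fun x hx => sq_le_two_mul_sq_add_integral_deriv_sq hg hc hx
    _ = _ := by rw [intervalIntegral.integral_const, smul_eq_mul]; ring

theorem stmt_1 (f : ℝ → ℝ) (hf : ContDiff ℝ 2 f) (a b : ℝ) (hab : a < b) :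
    (∫ x in a..b, (deriv f x) ^ 2) ≤
      2 * (b - a) ^ 2 * (∫ x in a..b, (deriv (deriv f) x) ^ 2)
        + 2 * (f b - f a) ^ 2 / (b - a) := by
  have hf' : ContDiff ℝ 1 (deriv f) := ((contDiff_succ_iff_deriv (n := 1)).mp hf).2.2
  obtain ⟨c, hc, hslope⟩ := exists_deriv_eq_slope f hab hf.continuous.continuousOn
    (hf.differentiable two_ne_zero).differentiableOn
  have hba : b - a ≠ 0 := (sub_pos.2 hab).ne'
  calc _ ≤ _ := integral_sq_le_of_contDiff_one hf' (Ioo_subset_Icc_self hc)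
    _ = _ := by rw [hslope]; field_simp; ring
end

section
/- Let g : [0,∞) → ℝ be nonnegative and continuous, and suppose g(t)² ≤ ∫₀ᵗ H(τ) g(τ) dτ for all t ≥ 0, where H : [0,∞) → ℝ is continuous and nonnegative. Then for every t ≥ 0, sup_{0 ≤ τ ≤ t} g(τ) ≤ ∫₀ᵗ H(τ) dτ. -/
open Real MeasureTheory Set

theorem stmt_3 (g H : ℝ → ℝ)
    (hg : ContinuousOn g (Ici 0)) (hH : ContinuousOn H (Ici 0))
    (hg0 : ∀ t ≥ (0:ℝ), 0 ≤ g t) (hH0 : ∀ t ≥ (0:ℝ), 0 ≤ H t)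
    (hyp : ∀ t ≥ (0:ℝ), (g t) ^ 2 ≤ ∫ τ in (0:ℝ)..t, H τ * g τ) :
    ∀ t ≥ (0:ℝ), sSup (g '' Icc 0 t) ≤ ∫ τ in (0:ℝ)..t, H τ := by
  intro t ht
  have hsub : Icc (0:ℝ) t ⊆ Ici 0 := Icc_subset_Ici_self
  have hgc := hg.mono hsub
  have hne : (Icc (0:ℝ) t).Nonempty := nonempty_Icc.2 ht
  obtain ⟨x, hx, hmax⟩ := isCompact_Icc.exists_isMaxOn hne hgc
  have hsup : sSup (g '' Icc 0 t) = g x := by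
    apply le_antisymm
    · apply csSup_le (hne.image g)
      rintro _ ⟨y, hy, rfl⟩
      exact hmax hy
    · exact le_csSup (isCompact_Icc.image_of_continuousOn hgc).bddAbove ⟨x, hx, rfl⟩
  rw [hsup]
  have hx0 : (0:ℝ) ≤ x := hx.1
  have hxt : x ≤ t := hx.2
  have hHt : IntervalIntegrable H volume 0 t := by
    apply ContinuousOn.intervalIntegrable
    rw [uIcc_of_le ht]; exact hH.mono Icc_subset_Ici_self
  have hHx : IntervalIntegrable H volume 0 x := by
    apply ContinuousOn.intervalIntegrable
    rw [uIcc_of_le hx0]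
    exact hH.mono (Icc_subset_Ici_self)
  have hHgx : IntervalIntegrable (fun τ => H τ * g τ) volume 0 x := by
    apply ContinuousOn.intervalIntegrable
    rw [uIcc_of_le hx0]
    exact ((hH.mono Icc_subset_Ici_self).mul (hg.mono Icc_subset_Ici_self))
  have hInt0 : (0:ℝ) ≤ ∫ τ in (0:ℝ)..t, H τ :=
    intervalIntegral.integral_nonneg ht (fun u hu => hH0 u hu.1)
  have step1 : g x ^ 2 ≤ ∫ τ in (0:ℝ)..x, H τ * g τ := hyp x hx0
  have step2 : (∫ τ in (0:ℝ)..x, H τ * g τ) ≤ ∫ τ in (0:ℝ)..x, H τ * g x := by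
    apply intervalIntegral.integral_mono_on hx0 hHgx (hHx.mul_const _)
    intro τ hτ
    exact mul_le_mul_of_nonneg_left (hmax ⟨hτ.1, hτ.2.trans hxt⟩) (hH0 τ hτ.1)
  have step3 : (∫ τ in (0:ℝ)..x, H τ * g x) = (∫ τ in (0:ℝ)..x, H τ) * g x :=
    intervalIntegral.integral_mul_const _ _
  have step4 : (∫ τ in (0:ℝ)..x, H τ) ≤ ∫ τ in (0:ℝ)..t, H τ := by
    apply intervalIntegral.integral_mono_interval le_rfl hx0 hxt _ hHt
    filter_upwards [ae_restrict_mem measurableSet_Ioc] with u hu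
    exact hH0 u hu.1.le
  have hgx0 : 0 ≤ g x := hg0 x hx0
  have key : g x ^ 2 ≤ (∫ τ in (0:ℝ)..t, H τ) * g x := by
    calc g x ^ 2 ≤ ∫ τ in (0:ℝ)..x, H τ * g τ := step1
      _ ≤ (∫ τ in (0:ℝ)..x, H τ) * g x := by rw [← step3]; exact step2
      _ ≤ (∫ τ in (0:ℝ)..t, H τ) * g x := mul_le_mul_of_nonneg_right step4 hgx0
  rcases eq_or_lt_of_le hgx0 with h | h
  · rw [← h]; exact hInt0
  · nlinarith [key]
end
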